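/- arXiv:1706.00876 — 2 statements merged into one kernel-verified Lean document; each statement's English description precedes it below -/
import Mathlib

section
/- Let α₁, α₂, β₁, β₂ be homogeneous polynomials of degree 2 in ℂ[z,w], and let a, b ∈ ℂ with a ≠ 0. Suppose α₁w = β₁z, α₂(az+bw) = β₂w, and α₁(az+bw) + α₂w = β₂z + β₁w. Then there exists a linear form u ∈ ℂ[z,w]₁ with α₁ = uz, β₁ = uw, α₂ = uw, and β₂ = u(az+bw). -/
/-! Since `z` is prime and does not divide `w`, the relation `α₁ w = β₁ z` gives
`α₁ = u z` and `β₁ = u w`. Eliminating `β₂` from the other two relations leaves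
`(α₂ - u w) ((a z + b w) z - w²) = 0`, and the quadratic factor is nonzero since its value at
`(z, w) = (1, 0)` is `a ≠ 0`. -/

open MvPolynomial

local notation "z" => (X 0 : MvPolynomial (Fin 2) ℂ)
local notation "w" => (X 1 : MvPolynomial (Fin 2) ℂ)

namespace MvPolynomial

variable {σ R : Type*}

theorem IsHomogeneous.of_mul_X [CommSemiring R] {p : MvPolynomial σ R} {i : σ} {n : ℕ}
    (h : (p * X i).IsHomogeneous (n + 1)) : p.IsHomogeneous n := by
  intro d hd
  have hdi := h (d := d + Finsupp.single i 1) (by rwa [coeff_mul_X])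
  rw [map_add, Finsupp.weight_single, Pi.one_apply, smul_eq_mul, mul_one] at hdi
  omega

theorem exists_eq_mul_X_of_mul_X_eq_mul_X [CommRing R] [IsDomain R] {i j : σ} (hij : i ≠ j)
    {p q : MvPolynomial σ R} (h : p * X j = q * X i) : ∃ u, p = u * X i ∧ q = u * X j := by
  have hdvd : X i ∣ p * X j := ⟨q, by rw [h, mul_comm]⟩
  obtain ⟨u, rfl⟩ := (X_prime.dvd_mul.mp hdvd).resolve_right (by rwa [X_dvd_X])
  refine ⟨u, mul_comm _ _, mul_left_cancel₀ (X_ne_zero i) ?_⟩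
  linear_combination -h

theorem C_mul_X_add_C_mul_X_mul_X_sub_X_mul_X_ne_zero [CommRing R] [Nontrivial R]
    [DecidableEq σ] {i j : σ} (hij : i ≠ j) {a : R} (ha : a ≠ 0) (b : R) :
    (C a * X i + C b * X j) * X i - X j * X j ≠ 0 := by
  intro h
  exact ha (by simpa [hij.symm] using congrArg (eval (Pi.single i 1)) h)

end MvPolynomial

theorem stmt_5_general (α₁ α₂ β₁ β₂ : MvPolynomial (Fin 2) ℂ)
    (hα₁ : α₁.IsHomogeneous 2)
    (a b : ℂ) (ha : a ≠ 0)
    (h1 : α₁ * w = β₁ * z)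
    (h2 : α₂ * (C a * z + C b * w) = β₂ * w)
    (h3 : α₁ * (C a * z + C b * w) + α₂ * w = β₂ * z + β₁ * w) :
    ∃ u : MvPolynomial (Fin 2) ℂ, u.IsHomogeneous 1 ∧
      α₁ = u * z ∧ β₁ = u * w ∧ α₂ = u * w ∧ β₂ = u * (C a * z + C b * w) := by
  have h01 : (0 : Fin 2) ≠ 1 := by decide
  obtain ⟨u, hα₁u, hβ₁u⟩ := exists_eq_mul_X_of_mul_X_eq_mul_X h01 h1
  have hu : u.IsHomogeneous 1 := (hα₁u ▸ hα₁).of_mul_X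
  have hα₂u : α₂ = u * w := by
    have hq := C_mul_X_add_C_mul_X_mul_X_sub_X_mul_X_ne_zero h01 ha b
    have hkey : (α₂ - u * w) * ((C a * z + C b * w) * z - w * w) = 0 := by
      subst hα₁u hβ₁u
      linear_combination z * h2 - w * h3
    exact sub_eq_zero.mp ((mul_eq_zero.mp hkey).resolve_right hq)
  have hβ₂u : β₂ = u * (C a * z + C b * w) := by
    refine mul_right_cancel₀ (X_ne_zero 1) ?_
    linear_combination -h2 + (C a * z + C b * w) * hα₂u
  exact ⟨u, hu, hα₁u, hβ₁u, hα₂u, hβ₂u⟩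

/-- Case 1 of Proposition 4: from the three determinant relations, all entries of the
first column factor through a single common linear form `u`. -/
theorem stmt_5 (α₁ α₂ β₁ β₂ : MvPolynomial (Fin 2) ℂ)
    (hα₁ : α₁.IsHomogeneous 2) (hα₂ : α₂.IsHomogeneous 2)
    (hβ₁ : β₁.IsHomogeneous 2) (hβ₂ : β₂.IsHomogeneous 2)
    (a b : ℂ) (ha : a ≠ 0)
    (h1 : α₁ * w = β₁ * z)
    (h2 : α₂ * (C a * z + C b * w) = β₂ * w)
    (h3 : α₁ * (C a * z + C b * w) + α₂ * w = β₂ * z + β₁ * w) :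
    ∃ u : MvPolynomial (Fin 2) ℂ, u.IsHomogeneous 1 ∧
      α₁ = u * z ∧ β₁ = u * w ∧ α₂ = u * w ∧ β₂ = u * (C a * z + C b * w) :=
  stmt_5_general α₁ α₂ β₁ β₂ hα₁ a b ha h1 h2 h3
end

section
/- Let α₁, α₂, β₁, β₂ be homogeneous degree-2 polynomials in ℂ[z,w] and a ∈ ℂ. If x²⊗(α₁w - β₁z) + xy⊗(α₁(z+aw) + α₂w - β₂z) + y²⊗(α₂(z+aw)) = 0 in ℂ[x,y]₂ ⊗ ℂ[z,w]₃, then α₂ = 0, and there exists a linear form u with α₁ = uz, β₁ = uw, β₂ = u(z+aw). -/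
open MvPolynomial TensorProduct

local notation "x" => (X 0 : MvPolynomial (Fin 2) ℂ)
local notation "y" => (X 1 : MvPolynomial (Fin 2) ℂ)
local notation "z" => (X 0 : MvPolynomial (Fin 2) ℂ)
local notation "w" => (X 1 : MvPolynomial (Fin 2) ℂ)

noncomputable def extr (m : Fin 2 →₀ ℕ) :
    MvPolynomial (Fin 2) ℂ ⊗[ℂ] MvPolynomial (Fin 2) ℂ →ₗ[ℂ] MvPolynomial (Fin 2) ℂ :=
  (TensorProduct.lid ℂ _).toLinearMap ∘ₗ LinearMap.rTensor _ (lcoeff ℂ m)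

lemma extr_tmul (m : Fin 2 →₀ ℕ) (p q : MvPolynomial (Fin 2) ℂ) :
    extr m (p ⊗ₜ[ℂ] q) = coeff m p • q := by
  simp [extr, lcoeff_apply]

lemma cA : coeff (Finsupp.single 0 2) (x ^ 2) = 1 := by
  simp [X_pow_eq_monomial, coeff_monomial]
lemma cB : coeff (Finsupp.single 0 2) (x * y) = 0 := by
  simp [X, monomial_mul, coeff_monomial, Finsupp.ext_iff]
lemma cC : coeff (Finsupp.single 0 2) (y ^ 2) = 0 := by
  simp [X_pow_eq_monomial, coeff_monomial, Finsupp.ext_iff]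
lemma cD : coeff (Finsupp.single 0 1 + Finsupp.single 1 1) (x ^ 2) = 0 := by
  simp [X_pow_eq_monomial, coeff_monomial, Finsupp.ext_iff]
lemma cE : coeff (Finsupp.single 0 1 + Finsupp.single 1 1) (x * y) = 1 := by
  simp [X, monomial_mul, coeff_monomial]
lemma cF : coeff (Finsupp.single 0 1 + Finsupp.single 1 1) (y ^ 2) = 0 := by
  simp [X_pow_eq_monomial, coeff_monomial, Finsupp.ext_iff]
lemma cG : coeff (Finsupp.single 1 2) (x ^ 2) = 0 := by
  simp [X_pow_eq_monomial, coeff_monomial, Finsupp.ext_iff]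
lemma cH : coeff (Finsupp.single 1 2) (x * y) = 0 := by
  simp [X, monomial_mul, coeff_monomial, Finsupp.ext_iff]
lemma cI : coeff (Finsupp.single 1 2) (y ^ 2) = 1 := by
  simp [X_pow_eq_monomial, coeff_monomial]

lemma prime_z : Prime (X 0 : MvPolynomial (Fin 2) ℂ) := by
  have h1 : Prime (Polynomial.X : Polynomial (MvPolynomial (Fin 1) ℂ)) := Polynomial.prime_X
  have h2 : (finSuccEquiv ℂ 1) (X 0) = Polynomial.X := finSuccEquiv_X_zero
  rw [← h2] at h1
  exact (MulEquiv.prime_iff (finSuccEquiv ℂ 1).toMulEquiv).mp h1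

lemma zero_ne_zpaw (a : ℂ) : ((X 0 : MvPolynomial (Fin 2) ℂ) + C a * X 1) ≠ 0 := by
  intro hc
  have hne : (Finsupp.single 1 1 : Fin 2 →₀ ℕ) ≠ Finsupp.single 0 1 := by
    intro hs
    have := congrArg (fun f : Fin 2 →₀ ℕ => f 0) hs
    simp at this
  have := congrArg (coeff (Finsupp.single 0 1)) hc
  rw [coeff_add, coeff_X, coeff_C_mul, coeff_X', if_neg hne] at this
  simp at this

lemma aux_homog (p : MvPolynomial (Fin 2) ℂ)
    (hp : ((X 0 : MvPolynomial (Fin 2) ℂ) * p).IsHomogeneous 2) : p.IsHomogeneous 1 := by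
  have key : (X 0 : MvPolynomial (Fin 2) ℂ) * p =
      ∑ i ∈ Finset.range (p.totalDegree + 1), X 0 * homogeneousComponent i p := by
    rw [← Finset.mul_sum, sum_homogeneousComponent]
  have h2 : (∑ i ∈ Finset.range (p.totalDegree + 1),
      homogeneousComponent 2 ((X 0 : MvPolynomial (Fin 2) ℂ) * homogeneousComponent i p))
      = X 0 * p := by
    rw [← map_sum, ← key,
      homogeneousComponent_of_mem ((mem_homogeneousSubmodule _ _).mpr hp)]
    simp
  have hterm : ∀ i ∈ Finset.range (p.totalDegree + 1),
      homogeneousComponent 2 ((X 0 : MvPolynomial (Fin 2) ℂ) * homogeneousComponent i p)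
      = if i = 1 then X 0 * homogeneousComponent 1 p else 0 := by
    intro i _
    have hmem := (mem_homogeneousSubmodule _ _).mpr
      ((isHomogeneous_X ℂ (0 : Fin 2)).mul (homogeneousComponent_isHomogeneous i p))
    rw [homogeneousComponent_of_mem hmem]
    by_cases hi : i = 1 <;> simp [hi] <;> omega
  rw [Finset.sum_congr rfl hterm, Finset.sum_ite_eq' _ 1 (fun _ => _)] at h2
  by_cases hmem : (1 : ℕ) ∈ Finset.range (p.totalDegree + 1)
  · rw [if_pos hmem] at h2
    rw [← mul_left_cancel₀ (X_ne_zero (0 : Fin 2)) h2]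
    exact homogeneousComponent_isHomogeneous 1 p
  · rw [if_neg hmem] at h2
    have hp0 : p = 0 := by
      rcases mul_eq_zero.mp h2.symm with h | h
      · exact absurd h (X_ne_zero 0)
      · exact h
    rw [hp0]; exact isHomogeneous_zero _ _ _

/-- Case 2 of Proposition 4: vanishing of
`x²⊗(α₁w - β₁z) + xy⊗(α₁(z+aw) + α₂w - β₂z) + y²⊗(α₂(z+aw))` in `ℂ[x,y] ⊗ ℂ[z,w]`
forces `α₂ = 0` and a common linear factor `u` with `α₁ = uz`, `β₁ = uw`, `β₂ = u(z+aw)`. -/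
theorem stmt_6 (α₁ α₂ β₁ β₂ : MvPolynomial (Fin 2) ℂ)
    (hα₁ : α₁.IsHomogeneous 2) (hα₂ : α₂.IsHomogeneous 2)
    (hβ₁ : β₁.IsHomogeneous 2) (hβ₂ : β₂.IsHomogeneous 2)
    (a : ℂ)
    (h : (x ^ 2) ⊗ₜ[ℂ] (α₁ * w - β₁ * z)
        + (x * y) ⊗ₜ[ℂ] (α₁ * (z + C a * w) + α₂ * w - β₂ * z)
        + (y ^ 2) ⊗ₜ[ℂ] (α₂ * (z + C a * w))
        = (0 : MvPolynomial (Fin 2) ℂ ⊗[ℂ] MvPolynomial (Fin 2) ℂ)) :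
    α₂ = 0 ∧ ∃ u : MvPolynomial (Fin 2) ℂ, u.IsHomogeneous 1 ∧
      α₁ = u * z ∧ β₁ = u * w ∧ β₂ = u * (z + C a * w) := by
  have e1 : α₁ * w - β₁ * z = 0 := by
    have := congrArg (extr (Finsupp.single 0 2)) h
    simpa [map_add, extr_tmul, cA, cB, cC] using this
  have e2 : α₁ * (z + C a * w) + α₂ * w - β₂ * z = 0 := by
    have := congrArg (extr (Finsupp.single 0 1 + Finsupp.single 1 1)) h
    simpa [map_add, extr_tmul, cD, cE, cF] using this
  have e3 : α₂ * (z + C a * w) = 0 := by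
    have := congrArg (extr (Finsupp.single 1 2)) h
    simpa [map_add, extr_tmul, cG, cH, cI] using this
  have ha2 : α₂ = 0 := by
    rcases mul_eq_zero.mp e3 with h' | h'
    · exact h'
    · exact absurd h' (zero_ne_zpaw a)
  refine ⟨ha2, ?_⟩
  have e1' : α₁ * w = β₁ * z := sub_eq_zero.mp e1
  have hdvd : z ∣ α₁ * w := ⟨β₁, by rw [e1']; ring⟩
  have hnw : ¬ (z ∣ w) := by
    rintro ⟨c, hc⟩
    have := congrArg (eval (fun i : Fin 2 => if i = 0 then 0 else 1)) hc
    simp at this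
  obtain ⟨u, hu⟩ := (prime_z.2.2 α₁ w hdvd).resolve_right hnw
  have hα₁u : α₁ = u * z := by rw [hu]; ring
  have huh : u.IsHomogeneous 1 := aux_homog u (hu ▸ hα₁)
  refine ⟨u, huh, hα₁u, ?_, ?_⟩
  · have : β₁ * z = (u * w) * z := by rw [← e1', hα₁u]; ring
    exact mul_right_cancel₀ (X_ne_zero 0) this
  · have e2' : β₂ * z = (u * (z + C a * w)) * z := by
      have := sub_eq_zero.mp e2
      rw [ha2] at this; rw [← this, hα₁u]; ring
    exact mul_right_cancel₀ (X_ne_zero 0) e2'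
end
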